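/- Let T > 0 and define v(x,y,t) = exp(−√((x² + y²)/(T − t + 1))) + √((x² + y²)/(T − t + 1)). Then for every t ∈ (0,T) and every (x,y) ∈ ℝ² with (x,y) ≠ (0,0), the function v satisfies the fully nonlinear partial differential equation −∂v/∂t − (1/2)·√((x² + y²)/(T − t + 1))·Δv + (1/2)·(T − t + 1)^{−1/2}·|∇v| = −(1/2)·√(x² + y²)/(T − t + 1)^{3/2}, where ∇v and Δv are the gradient and Laplacian with respect to the spatial variables (x,y) and |·| is the Euclidean norm on ℝ². -/

import Mathlib

/-!
Write `r = √(x² + y²)`, `S = T - t + 1` and `ρ = r / √S`, so that `v = φ ρ` with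
`φ = hjbProfile`, `φ s = exp (-s) + s`. For a radial function `g r` of the plane, `Δ = g'' + g' / r` and
`|∇| = |g'|`; with `g = φ (· / √S)` and `∂ₜρ = ρ / (2S)` the left-hand side collapses to
`-(ρ / 2S) (φ' ρ + φ'' ρ)`, and `φ' + φ'' = 1`. That `φ' ≥ 0` removes the absolute value.
-/

open Real Topology

section Radial

variable {g : ℝ → ℝ} {g' b x y : ℝ}

theorem hasDerivAt_comp_sqrt_sq_add (hg : HasDerivAt g g' √(x ^ 2 + b)) (h : 0 < x ^ 2 + b) :
    HasDerivAt (fun u => g √(u ^ 2 + b)) (g' * (x / √(x ^ 2 + b))) x := by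
  have hsq : HasDerivAt (fun u => u ^ 2 + b) (2 * x) x := by
    simpa using (hasDerivAt_pow 2 x).add_const b
  refine (hg.comp x (hsq.sqrt h.ne')).congr_deriv ?_
  have : √(x ^ 2 + b) ≠ 0 := (sqrt_pos.mpr h).ne'
  field_simp

theorem hasDerivAt_div_sqrt_sq_add (h : 0 < x ^ 2 + b) :
    HasDerivAt (fun u => u / √(u ^ 2 + b)) (b / √(x ^ 2 + b) ^ 3) x := by
  have hr : √(x ^ 2 + b) ≠ 0 := (sqrt_pos.mpr h).ne'
  refine ((hasDerivAt_id' x).div (hasDerivAt_comp_sqrt_sq_add (hasDerivAt_id' _) h) hr).congr_deriv ?_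
  field_simp
  rw [sq_sqrt h.le]
  ring

theorem deriv_comp_sqrt_sq_add (hg : DifferentiableAt ℝ g √(x ^ 2 + b)) (h : 0 < x ^ 2 + b) :
    deriv (fun u => g √(u ^ 2 + b)) x = deriv g √(x ^ 2 + b) * (x / √(x ^ 2 + b)) :=
  (hasDerivAt_comp_sqrt_sq_add hg.hasDerivAt h).deriv

theorem deriv_deriv_comp_sqrt_sq_add (hg : ContDiff ℝ 2 g) (h : 0 < x ^ 2 + b) :
    deriv (fun u => deriv (fun w => g √(w ^ 2 + b)) u) x
      = deriv (deriv g) √(x ^ 2 + b) * (x / √(x ^ 2 + b)) ^ 2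
        + deriv g √(x ^ 2 + b) * (b / √(x ^ 2 + b) ^ 3) := by
  obtain ⟨hg₁, -, hg₂⟩ := (contDiff_succ_iff_deriv (n := 1)).mp hg
  have hnhds : ∀ᶠ u in 𝓝 x, 0 < u ^ 2 + b :=
    continuousAt_const.eventually_lt (by fun_prop : ContinuousAt (fun u => u ^ 2 + b) x) h
  have heq : (fun u => deriv (fun w => g √(w ^ 2 + b)) u)
      =ᶠ[𝓝 x] fun u => deriv g √(u ^ 2 + b) * (u / √(u ^ 2 + b)) :=
    hnhds.mono fun u hu => deriv_comp_sqrt_sq_add (hg₁ _) hu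
  rw [heq.deriv_eq]
  refine ((hasDerivAt_comp_sqrt_sq_add ((hg₂.differentiable one_ne_zero) _).hasDerivAt h).mul
    (hasDerivAt_div_sqrt_sq_add h)).deriv.trans ?_
  ring

theorem laplacian_comp_sqrt_sq_add_sq (hg : ContDiff ℝ 2 g) (h : 0 < x ^ 2 + y ^ 2) :
    deriv (fun u => deriv (fun w => g √(w ^ 2 + y ^ 2)) u) x
        + deriv (fun u => deriv (fun w => g √(x ^ 2 + w ^ 2)) u) y
      = deriv (deriv g) √(x ^ 2 + y ^ 2) + deriv g √(x ^ 2 + y ^ 2) / √(x ^ 2 + y ^ 2) := by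
  have hyx : y ^ 2 + x ^ 2 = x ^ 2 + y ^ 2 := add_comm _ _
  simp only [add_comm (x ^ 2) (_ ^ 2)]
  rw [deriv_deriv_comp_sqrt_sq_add hg h, deriv_deriv_comp_sqrt_sq_add hg (hyx ▸ h), hyx]
  have hr : √(x ^ 2 + y ^ 2) ≠ 0 := (sqrt_pos.mpr h).ne'
  field_simp
  rw [sq_sqrt h.le]
  ring

theorem gradient_norm_comp_sqrt_sq_add_sq (hg : Differentiable ℝ g) (h : 0 < x ^ 2 + y ^ 2) :
    √((deriv (fun u => g √(u ^ 2 + y ^ 2)) x) ^ 2 + (deriv (fun w => g √(x ^ 2 + w ^ 2)) y) ^ 2)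
      = |deriv g √(x ^ 2 + y ^ 2)| := by
  have hyx : y ^ 2 + x ^ 2 = x ^ 2 + y ^ 2 := add_comm _ _
  simp only [add_comm (x ^ 2) (_ ^ 2)]
  rw [deriv_comp_sqrt_sq_add (hg _) h, deriv_comp_sqrt_sq_add (hg _) (hyx ▸ h), hyx,
    ← sqrt_sq_eq_abs]
  congr 1
  have hr : √(x ^ 2 + y ^ 2) ≠ 0 := (sqrt_pos.mpr h).ne'
  field_simp
  rw [sq_sqrt h.le]
  ring

end Radial

theorem deriv_deriv_comp_mul_left (f : ℝ → ℝ) (c x : ℝ) :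
    deriv (deriv fun s => f (c * s)) x = c ^ 2 * deriv (deriv f) (c * x) := by
  have hf' : deriv (fun s => f (c * s)) = fun s => c * deriv f (c * s) :=
    funext (deriv_comp_mul_left c f)
  simp only [hf', deriv_const_mul_field', deriv_comp_mul_left, smul_eq_mul]
  ring

theorem hasDerivAt_comp_sqrt_div_sub_add_one {φ : ℝ → ℝ} {a T t : ℝ}
    (hφ : DifferentiableAt ℝ φ √(a / (T - t + 1))) (ha : 0 < a) (hs : 0 < T - t + 1) :
    HasDerivAt (fun τ => φ √(a / (T - τ + 1)))
      (deriv φ √(a / (T - t + 1)) * (√(a / (T - t + 1)) / (2 * (T - t + 1)))) t := by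
  have hden : HasDerivAt (fun τ => T - τ + 1) (-1) t := by
    simpa using ((hasDerivAt_id' t).const_sub T).add_const 1
  have hquot : HasDerivAt (fun τ => a / (T - τ + 1)) (a / (T - t + 1) ^ 2) t :=
    ((hasDerivAt_const t a).div hden hs.ne').congr_deriv (by ring)
  refine (hφ.hasDerivAt.comp t (hquot.sqrt (by positivity))).congr_deriv ?_
  have hq : √(a / (T - t + 1)) ≠ 0 := (sqrt_pos.mpr (by positivity)).ne'
  field_simp
  rw [sq_sqrt (by positivity)]
  field_simp

noncomputable def hjbProfile (s : ℝ) : ℝ := exp (-s) + s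

theorem contDiff_hjbProfile : ContDiff ℝ 2 hjbProfile := by
  unfold hjbProfile
  fun_prop

theorem hasDerivAt_hjbProfile (s : ℝ) : HasDerivAt hjbProfile (1 - exp (-s)) s :=
  ((hasDerivAt_neg' s).exp.add (hasDerivAt_id' s)).congr_deriv (by ring)

theorem deriv_hjbProfile : deriv hjbProfile = fun s => 1 - exp (-s) :=
  funext fun s => (hasDerivAt_hjbProfile s).deriv

theorem deriv_hjbProfile_add_deriv_deriv (s : ℝ) :
    deriv hjbProfile s + deriv (deriv hjbProfile) s = 1 := by
  have : deriv (deriv hjbProfile) s = exp (-s) := by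
    simpa [deriv_hjbProfile] using ((hasDerivAt_neg' s).exp.const_sub 1).deriv
  rw [this, deriv_hjbProfile]
  ring

theorem deriv_hjbProfile_nonneg {s : ℝ} (hs : 0 ≤ s) : 0 ≤ deriv hjbProfile s := by
  simpa [deriv_hjbProfile] using hs

theorem exact_solution_satisfies_HJB_general (T : ℝ)
    (v : ℝ → ℝ → ℝ → ℝ)
    (hv : ∀ x y t, v x y t
      = Real.exp (-(Real.sqrt ((x ^ 2 + y ^ 2) / (T - t + 1))))
          + Real.sqrt ((x ^ 2 + y ^ 2) / (T - t + 1)))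
    (t : ℝ) (ht : t ∈ Set.Ioo 0 T) (x y : ℝ) (hxy : (x, y) ≠ (0, 0)) :
    -(deriv (fun τ => v x y τ) t)
      - (1 / 2) * Real.sqrt ((x ^ 2 + y ^ 2) / (T - t + 1))
        * (deriv (fun u => deriv (fun w => v w y t) u) x
            + deriv (fun u => deriv (fun w => v x w t) u) y)
      + (1 / 2) * (T - t + 1) ^ (-(1 : ℝ) / 2)
        * Real.sqrt ((deriv (fun u => v u y t) x) ^ 2 + (deriv (fun u => v x u t) y) ^ 2)
    = -(1 / 2) * Real.sqrt (x ^ 2 + y ^ 2) / (T - t + 1) ^ ((3 : ℝ) / 2) := by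
  have hS : 0 < T - t + 1 := by linarith [ht.2]
  have hr : 0 < x ^ 2 + y ^ 2 := by
    contrapose! hxy
    obtain ⟨rfl, rfl⟩ : x = 0 ∧ y = 0 := by constructor <;> nlinarith
    rfl
  have hv' : ∀ a b τ, v a b τ = hjbProfile √((a ^ 2 + b ^ 2) / (T - τ + 1)) := hv
  simp only [hv']
  rw [(hasDerivAt_comp_sqrt_div_sub_add_one (contDiff_hjbProfile.differentiable two_ne_zero _)
      hr hS).deriv, rpow_div_two_eq_sqrt _ hS.le, rpow_div_two_eq_sqrt _ hS.le, rpow_neg_one,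
    rpow_ofNat]
  simp only [sqrt_div' _ hS.le]
  set q := √(T - t + 1)
  have hq : 0 < q := sqrt_pos.mpr hS
  have hq2 : q ^ 2 = T - t + 1 := sq_sqrt hS.le
  simp only [div_eq_inv_mul _ q]
  have hprofile : ContDiff ℝ 2 fun s => hjbProfile (q⁻¹ * s) :=
    contDiff_hjbProfile.comp (contDiff_const.mul contDiff_id)
  rw [laplacian_comp_sqrt_sq_add_sq hprofile hr,
    gradient_norm_comp_sqrt_sq_add_sq (hprofile.differentiable two_ne_zero) hr,
    deriv_comp_mul_left, deriv_deriv_comp_mul_left, smul_eq_mul,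
    abs_of_nonneg (mul_nonneg (inv_pos.mpr hq).le (deriv_hjbProfile_nonneg (by positivity))),
    ← hq2, inv_mul_eq_div]
  have hφ := deriv_hjbProfile_add_deriv_deriv (√(x ^ 2 + y ^ 2) / q)
  field_simp
  linear_combination (-√(x ^ 2 + y ^ 2)) * hφ

/-- The function `v(x,y,t) = exp(−√((x²+y²)/(T−t+1))) + √((x²+y²)/(T−t+1))` satisfies,
for `t ∈ (0,T)` and `(x,y) ≠ (0,0)`, the Hamilton-Jacobi-Bellman equation
`−v_t − (1/2)√((x²+y²)/(T−t+1)) Δv + (1/2)(T−t+1)^{−1/2} |∇v|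
  = −(1/2)√(x²+y²)/(T−t+1)^{3/2}`,
where the spatial Laplacian is the sum of the two second spatial partial derivatives and
`|∇v| = √(v_x² + v_y²)` is the Euclidean norm of the spatial gradient. -/
theorem exact_solution_satisfies_HJB (T : ℝ) (hT : 0 < T)
    (v : ℝ → ℝ → ℝ → ℝ)
    (hv : ∀ x y t, v x y t
      = Real.exp (-(Real.sqrt ((x ^ 2 + y ^ 2) / (T - t + 1))))
          + Real.sqrt ((x ^ 2 + y ^ 2) / (T - t + 1)))
    (t : ℝ) (ht : t ∈ Set.Ioo 0 T) (x y : ℝ) (hxy : (x, y) ≠ (0, 0)) :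
    -(deriv (fun τ => v x y τ) t)
      - (1 / 2) * Real.sqrt ((x ^ 2 + y ^ 2) / (T - t + 1))
        * (deriv (fun u => deriv (fun w => v w y t) u) x
            + deriv (fun u => deriv (fun w => v x w t) u) y)
      + (1 / 2) * (T - t + 1) ^ (-(1 : ℝ) / 2)
        * Real.sqrt ((deriv (fun u => v u y t) x) ^ 2 + (deriv (fun u => v x u t) y) ^ 2)
    = -(1 / 2) * Real.sqrt (x ^ 2 + y ^ 2) / (T - t + 1) ^ ((3 : ℝ) / 2) :=
  exact_solution_satisfies_HJB_general T v hv t ht x y hxy
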